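/- arXiv:1811.08243 — 5 statements merged into one kernel-verified Lean document; each statement's English description precedes it below -/
import Mathlib

section
/- Suppose r > 0 is such that for all (x,v) ∈ graph F with x ∈ U, v ∈ F(x), and all t with 0 < t < m_U(x) := d(x, X∖U), one has B(v, r·t) ∩ V ⊂ F(B(x,t)). Then for every 0 < r' < r and every ξ with 0 < ξ·r' < 1, the following holds: for all (x,v) ∈ graph F with x ∈ U and all y ∈ V with 0 < d(y,v) < r'·m_U(x), there exists (u,w) ∈ graph F such that d(y,w) < d(y,v) − r'·d_ξ((x,v),(u,w)), where d_ξ((x₁,v₁),(x₂,v₂)) := max{d(x₁,x₂), ξ·d(v₁,v₂)}. -/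
open Metric Set EMetric

/-- If `F` is Milyutin regular on `(U,V)` with rate `r`, then for every `0 < r' < r`
and `ξ` with `0 < ξ·r' < 1` the Ekeland-type decrease condition holds. -/
theorem milyutin_regular_implies_decrease
    {X Y : Type*} [MetricSpace X] [MetricSpace Y]
    (F : X → Set Y) (U : Set X) (V : Set Y) (r : ℝ) (hr : 0 < r)
    (hreg : ∀ x ∈ U, ∀ v ∈ F x, ∀ t : ℝ, 0 < t →
      ENNReal.ofReal t < infEdist x Uᶜ →
      closedBall v (r * t) ∩ V ⊆ ⋃ u ∈ closedBall x t, F u) :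
    ∀ r' : ℝ, 0 < r' → r' < r → ∀ ξ : ℝ, 0 < ξ → ξ * r' < 1 →
      ∀ x ∈ U, ∀ v ∈ F x, ∀ y ∈ V,
        0 < dist y v →
        ENNReal.ofReal (dist y v) < ENNReal.ofReal r' * infEdist x Uᶜ →
        ∃ u : X, ∃ w ∈ F u,
          dist y w < dist y v - r' * max (dist x u) (ξ * dist v w) := by
  intro r' hr'0 hr'r ξ hξ hξr' x hx v hv y hy hd hdist
  set d := dist y v with hdef
  set r'' : ℝ := (r' + r) / 2 with hr''
  have hr''0 : 0 < r'' := by positivity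
  have hr'lt : r' < r'' := by rw [hr'']; linarith
  have hr''lt : r'' < r := by rw [hr'']; linarith
  set t : ℝ := d / r'' with ht
  have ht0 : 0 < t := div_pos hd hr''0
  have htlt : ENNReal.ofReal t < infEdist x Uᶜ := by
    have h1 : ENNReal.ofReal d / ENNReal.ofReal r' < infEdist x Uᶜ := by
      rw [ENNReal.div_lt_iff (by simp [hr'0]) (by simp)]
      rwa [mul_comm] at hdist
    refine lt_of_lt_of_le ?_ h1.le
    rw [← ENNReal.ofReal_div_of_pos hr'0]
    exact (ENNReal.ofReal_lt_ofReal_iff (by positivity)).2 (div_lt_div_of_pos_left hd hr'0 hr'lt)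
  have hmem : y ∈ closedBall v (r * t) ∩ V := by
    constructor
    · rw [Metric.mem_closedBall]
      have : d ≤ r * (d / r'') := by
        rw [mul_div_assoc']
        rw [le_div_iff₀ hr''0]
        nlinarith
      simpa [← hdef] using this
    · exact hy
  obtain ⟨u, hu, hyu⟩ := by simpa using hreg x hx v hv t ht0 htlt hmem
  refine ⟨u, y, hyu, ?_⟩
  rw [dist_self, dist_comm v y, ← hdef]
  have hxu : dist x u ≤ t := by rw [dist_comm]; exact hu
  have h1 : r' * dist x u < d := by
    calc r' * dist x u ≤ r' * t := by nlinarith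
    _ < d := by rw [ht, mul_div_assoc', div_lt_iff₀ hr''0]; nlinarith
  have h2 : r' * (ξ * d) < d := by nlinarith
  have : r' * max (dist x u) (ξ * d) < d := by
    rcases max_cases (dist x u) (ξ * d) with ⟨h, _⟩ | ⟨h, _⟩ <;> rw [h]
    · exact h1
    · exact h2
  linarith
end

section
/- Suppose graph F is complete (as a metric subspace of X × Y with any product metric d_ξ) and r > 0 is such that for some ξ > 0: for all (x,v) ∈ graph F with x ∈ U and all y ∈ V with 0 < d(y,v) < r·m_U(x), there exists (u,w) ∈ graph F with d(y,w) < d(y,v) − r·d_ξ((x,v),(u,w)). Then F is Milyutin regular on (U,V) with rate r; that is, for all (x₀,v₀) ∈ graph F with x₀ ∈ U and all t with 0 < t < m_U(x₀), one has B(v₀, r·t) ∩ V ⊂ F(B(x₀,t)). -/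
open Metric Set EMetric Filter

/-- If `graph F` is complete and for some `ξ > 0` the Ekeland-type decrease condition
holds with rate `r`, then `F` is Milyutin regular on `(U,V)` with rate `r`. -/
theorem decrease_implies_milyutin_regular
    {X Y : Type*} [MetricSpace X] [MetricSpace Y]
    (F : X → Set Y) (U : Set X) (V : Set Y)
    (hcomp : IsComplete {p : X × Y | p.2 ∈ F p.1})
    (r : ℝ) (hr : 0 < r) (ξ : ℝ) (hξ : 0 < ξ)
    (hdec : ∀ x ∈ U, ∀ v ∈ F x, ∀ y ∈ V,
      0 < dist y v →
      ENNReal.ofReal (dist y v) < ENNReal.ofReal r * infEdist x Uᶜ →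
      ∃ u : X, ∃ w ∈ F u,
        dist y w < dist y v - r * max (dist x u) (ξ * dist v w)) :
    ∀ x₀ ∈ U, ∀ v₀ ∈ F x₀, ∀ t : ℝ, 0 < t →
      ENNReal.ofReal t < infEdist x₀ Uᶜ →
      closedBall v₀ (r * t) ∩ V ⊆ ⋃ u ∈ closedBall x₀ t, F u := by
  intro x₀ hx₀ v₀ hv₀ t ht htU y hy
  by_contra hy'
  simp only [mem_iUnion, exists_prop, not_exists, not_and] at hy'
  obtain ⟨hyb, hyV⟩ := hy
  have hyv₀ : dist y v₀ ≤ r * t := by simpa using hyb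
  -- the scaled "metric" on X × Y
  set D : X × Y → X × Y → ℝ := fun p q => max (dist p.1 q.1) (ξ * dist p.2 q.2) with hDdef
  have hD0 : ∀ p q, 0 ≤ D p q := fun p q => le_trans dist_nonneg (le_max_left _ _)
  have hDself : ∀ p, D p p = 0 := by intro p; simp [hDdef]
  have hDtri : ∀ p q s : X × Y, D p s ≤ D p q + D q s := by
    intro p q s
    apply max_le
    · exact le_trans (dist_triangle _ q.1 _)
        (add_le_add (le_max_left _ _) (le_max_left _ _))
    · calc ξ * dist p.2 s.2 ≤ ξ * (dist p.2 q.2 + dist q.2 s.2) :=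
            mul_le_mul_of_nonneg_left (dist_triangle _ _ _) hξ.le
        _ = ξ * dist p.2 q.2 + ξ * dist q.2 s.2 := by ring
        _ ≤ D p q + D q s := add_le_add (le_max_right _ _) (le_max_right _ _)
  have hDx : ∀ p q, dist p.1 q.1 ≤ D p q := fun p q => le_max_left _ _
  have hDy : ∀ p q, dist p.2 q.2 ≤ D p q / ξ := by
    intro p q
    rw [le_div_iff₀ hξ]
    simp only [hDdef, mul_comm]
    exact le_max_right _ _
  -- invariant
  set Good : X × Y → Prop := fun p => p.2 ∈ F p.1 ∧ dist y p.2 + r * dist x₀ p.1 ≤ r * t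
    with hGooddef
  have hGood0 : Good (x₀, v₀) := ⟨hv₀, by simpa using hyv₀⟩
  have hball : ∀ p, Good p → dist x₀ p.1 ≤ t := by
    intro p hp
    nlinarith [dist_nonneg (x := y) (y := p.2), hp.2]
  have hpos : ∀ p, Good p → 0 < dist y p.2 := by
    intro p hp
    rcases lt_or_eq_of_le (dist_nonneg (x := y) (y := p.2)) with h | h
    · exact h
    · exfalso
      have hyp : y = p.2 := dist_eq_zero.1 h.symm
      exact hy' p.1 (by simpa [Metric.mem_closedBall, dist_comm] using hball p hp) (hyp ▸ hp.1)
  -- the invariant gives the hypotheses of `hdec`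
  have hUg : ∀ p, Good p → p.1 ∈ U ∧
      ENNReal.ofReal (dist y p.2) < ENNReal.ofReal r * infEdist p.1 Uᶜ := by
    intro p hp
    have hd : dist x₀ p.1 ≤ t := hball p hp
    have ha : 0 < dist y p.2 := hpos p hp
    have hle : dist y p.2 ≤ r * (t - dist x₀ p.1) := by nlinarith [hp.2]
    have htd : 0 < t - dist x₀ p.1 := by nlinarith
    have hinf : ENNReal.ofReal (t - dist x₀ p.1) < infEdist p.1 Uᶜ := by
      by_contra hcon
      push_neg at hcon
      have h1 : infEdist x₀ Uᶜ ≤ infEdist p.1 Uᶜ + edist x₀ p.1 :=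
        infEdist_le_infEdist_add_edist
      have h2 : infEdist p.1 Uᶜ + edist x₀ p.1 ≤
          ENNReal.ofReal (t - dist x₀ p.1) + ENNReal.ofReal (dist x₀ p.1) :=
        add_le_add hcon (by rw [edist_dist])
      rw [← ENNReal.ofReal_add (by linarith) dist_nonneg] at h2
      simp only [sub_add_cancel] at h2
      exact absurd (le_trans h1 h2) (not_le.2 htU)
    refine ⟨?_, ?_⟩
    · have hpos' : 0 < infEdist p.1 Uᶜ :=
        lt_of_le_of_lt zero_le hinf
      have hnc := infEdist_pos_iff_notMem_closure.1 hpos'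
      by_contra hU
      exact hnc (subset_closure hU)
    · calc ENNReal.ofReal (dist y p.2) ≤ ENNReal.ofReal (r * (t - dist x₀ p.1)) :=
            ENNReal.ofReal_le_ofReal hle
        _ = ENNReal.ofReal r * ENNReal.ofReal (t - dist x₀ p.1) :=
            ENNReal.ofReal_mul hr.le
        _ < ENNReal.ofReal r * infEdist p.1 Uᶜ :=
            (ENNReal.mul_lt_mul_iff_right (ENNReal.ofReal_pos.2 hr).ne' ENNReal.ofReal_ne_top).2 hinf
  -- the set of achievable values from a state p
  set S : X × Y → Set ℝ := fun p =>
    {c | ∃ u w, w ∈ F u ∧ dist y w < dist y p.2 - r * D p (u, w) ∧ c = dist y w} with hSdef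
  have hSbd : ∀ p, BddBelow (S p) := by
    intro p
    refine ⟨0, fun c hc => ?_⟩
    obtain ⟨u, w, _, _, rfl⟩ := hc
    exact dist_nonneg
  have hSne : ∀ p, Good p → (S p).Nonempty := by
    intro p hp
    obtain ⟨hU, hEN⟩ := hUg p hp
    obtain ⟨u, w, hwF, hlt⟩ := hdec p.1 hU p.2 hp.1 y hyV (hpos p hp) hEN
    exact ⟨dist y w, u, w, hwF, hlt, rfl⟩
  -- admissible moves preserve the invariant
  have hSgood : ∀ p, Good p → ∀ u w, w ∈ F u →
      dist y w < dist y p.2 - r * D p (u, w) → Good (u, w) := by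
    intro p hp u w hwF hlt
    refine ⟨hwF, ?_⟩
    have h1 : dist x₀ u ≤ dist x₀ p.1 + dist p.1 u := dist_triangle _ _ _
    have h2 : dist p.1 u ≤ D p (u, w) := hDx p (u, w)
    nlinarith [hp.2]
  -- the inductive step
  have step : ∀ n : ℕ, ∀ p : X × Y, Good p → ∃ q : X × Y, Good q ∧
      dist y q.2 < dist y p.2 - r * D p q ∧ dist y q.2 < sInf (S p) + (1/2)^n := by
    intro n p hp
    have h1 : sInf (S p) < sInf (S p) + (1/2)^n := by
      have h : (0:ℝ) < (1/2)^n := by positivity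
      linarith
    obtain ⟨c, hc, hclt⟩ := exists_lt_of_csInf_lt (hSne p hp) h1
    obtain ⟨u, w, hwF, hlt, rfl⟩ := hc
    exact ⟨(u, w), hSgood p hp u w hwF hlt, hlt, hclt⟩
  choose! f hf1 hf2 hf3 using step
  -- the iterated sequence
  set p : ℕ → X × Y := fun n => Nat.rec (x₀, v₀) (fun n q => f n q) n with hpdef
  have hpsucc : ∀ n, p (n + 1) = f n (p n) := fun n => rfl
  have hGd : ∀ n, Good (p n) := by
    intro n
    induction n with
    | zero => exact hGood0
    | succ n ih => rw [hpsucc]; exact hf1 n (p n) ih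
  set a : ℕ → ℝ := fun n => dist y (p n).2 with hadef
  have hstep2 : ∀ n, a (n+1) < a n - r * D (p n) (p (n+1)) := by
    intro n
    have := hf2 n (p n) (hGd n)
    rw [← hpsucc n] at this
    exact this
  have hanti : ∀ n m, n ≤ m → r * D (p n) (p m) ≤ a n - a m := by
    intro n m hnm
    induction m, hnm using Nat.le_induction with
    | base => simp [hDself]
    | succ m hnm ih =>
      have h1 := hstep2 m
      have h2 : D (p n) (p (m+1)) ≤ D (p n) (p m) + D (p m) (p (m+1)) := hDtri _ _ _
      nlinarith [hD0 (p m) (p (m+1)), hD0 (p n) (p m)]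
  have haanti : Antitone a := antitone_nat_of_succ_le fun n => by
    nlinarith [hstep2 n, hD0 (p n) (p (n+1))]
  have ha0 : ∀ n, 0 ≤ a n := fun n => dist_nonneg
  have habdd : BddBelow (range a) := ⟨0, by rintro _ ⟨n, rfl⟩; exact ha0 n⟩
  set L : ℝ := ⨅ n, a n with hLdef
  have haL : Tendsto a atTop (nhds L) := tendsto_atTop_ciInf haanti habdd
  have hLle : ∀ n, L ≤ a n := fun n => ciInf_le habdd n
  -- Cauchyness
  have hdistle : ∀ N n m, N ≤ n → n ≤ m →
      dist (p n) (p m) ≤ max 1 ξ⁻¹ * ((a N - L) / r) := by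
    intro N n m hN hnm
    have hD := hanti n m hnm
    have hE0 : 0 ≤ (a N - L) / r := by
      have h := hLle N
      apply div_nonneg (by linarith) hr.le
    have hE : D (p n) (p m) ≤ (a N - L) / r := by
      rw [le_div_iff₀ hr]
      have h1 := haanti hN
      have h2 := hLle m
      nlinarith
    have hmax1 : (1:ℝ) ≤ max 1 ξ⁻¹ := le_max_left _ _
    have hmax2 : ξ⁻¹ ≤ max 1 ξ⁻¹ := le_max_right _ _
    rw [Prod.dist_eq]
    apply max_le
    · have := hDx (p n) (p m)
      nlinarith
    · have h3 := hDy (p n) (p m)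
      have h4 : D (p n) (p m) / ξ ≤ ξ⁻¹ * ((a N - L) / r) := by
        rw [div_eq_inv_mul]
        exact mul_le_mul_of_nonneg_left hE (by positivity)
      have h5 : ξ⁻¹ * ((a N - L) / r) ≤ max 1 ξ⁻¹ * ((a N - L) / r) :=
        mul_le_mul_of_nonneg_right hmax2 hE0
      linarith
  have hcauchy : CauchySeq p := by
    apply cauchySeq_of_le_tendsto_0 (fun N => max 1 ξ⁻¹ * ((a N - L) / r))
    · intro n m N hn hm
      rcases le_total n m with h | h
      · exact hdistle N n m hn h
      · rw [dist_comm]; exact hdistle N m n hm h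
    · have h1 : Tendsto (fun N => a N - L) atTop (nhds 0) := by
        simpa using haL.sub_const L
      have h2 : Tendsto (fun N => max 1 ξ⁻¹ * ((a N - L) / r)) atTop
          (nhds (max 1 ξ⁻¹ * (0 / r))) := (h1.div_const r).const_mul _
      simpa using h2
  -- the limit point
  obtain ⟨q, hqmem, hq⟩ := cauchySeq_tendsto_of_isComplete hcomp (fun n => (hGd n).1) hcauchy
  have hq1 : Tendsto (fun n => (p n).1) atTop (nhds q.1) :=
    (continuous_fst.tendsto q).comp hq
  have hq2 : Tendsto (fun n => (p n).2) atTop (nhds q.2) :=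
    (continuous_snd.tendsto q).comp hq
  have haq : Tendsto a atTop (nhds (dist y q.2)) :=
    ((continuous_const.dist continuous_id).tendsto q.2).comp hq2
  have hLq : L = dist y q.2 := tendsto_nhds_unique haL haq
  have hGq : Good q := by
    refine ⟨hqmem, ?_⟩
    have htend : Tendsto (fun n => a n + r * dist x₀ (p n).1) atTop
        (nhds (dist y q.2 + r * dist x₀ q.1)) :=
      haq.add (tendsto_const_nhds.mul
        (((continuous_const.dist continuous_id).tendsto q.1).comp hq1))
    exact le_of_tendsto htend (Filter.Eventually.of_forall fun n => (hGd n).2)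
  obtain ⟨hUq, hENq⟩ := hUg q hGq
  obtain ⟨u, w, hwF, hlt⟩ := hdec q.1 hUq q.2 hqmem y hyV (hpos q hGq) hENq
  have hlt' : dist y w < dist y q.2 - r * D q (u, w) := hlt
  have hDquw := hD0 q (u, w)
  have hwlt : dist y w < dist y q.2 := by nlinarith
  -- eventually small terms
  have hDq : Tendsto (fun n => D (p n) q) atTop (nhds 0) := by
    have t1 : Tendsto (fun n => dist (p n).1 q.1) atTop (nhds 0) :=
      tendsto_iff_dist_tendsto_zero.1 hq1
    have t2 : Tendsto (fun n => dist (p n).2 q.2) atTop (nhds 0) :=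
      tendsto_iff_dist_tendsto_zero.1 hq2
    have := t1.max (t2.const_mul ξ)
    simpa using this
  set ε : ℝ := dist y q.2 - r * D q (u, w) - dist y w with hεdef
  have hε : 0 < ε := by simp only [hεdef]; linarith
  have h1 : ∀ᶠ n in atTop, r * D (p n) q < ε := by
    have := hDq.const_mul r
    rw [mul_zero] at this
    exact this.eventually (gt_mem_nhds hε)
  have h2 : ∀ᶠ n : ℕ in atTop, (1/2:ℝ)^n < dist y q.2 - dist y w := by
    have hp2 : Tendsto (fun n : ℕ => (1/2:ℝ)^n) atTop (nhds 0) :=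
      tendsto_pow_atTop_nhds_zero_of_lt_one (by norm_num) (by norm_num)
    exact hp2.eventually (gt_mem_nhds (by linarith))
  obtain ⟨n, hn1, hn2⟩ := (h1.and h2).exists
  -- (u, w) is admissible from p n
  have hLn : dist y q.2 ≤ a n := hLq ▸ hLle n
  have hmem : dist y w ∈ S (p n) := by
    refine ⟨u, w, hwF, ?_, rfl⟩
    have hDt : D (p n) (u, w) ≤ D (p n) q + D q (u, w) := hDtri _ _ _
    nlinarith
  have hsinf : sInf (S (p n)) ≤ dist y w := csInf_le (hSbd (p n)) hmem
  have hlast : a (n+1) < sInf (S (p n)) + (1/2)^n := by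
    have := hf3 n (p n) (hGd n)
    rw [← hpsucc n] at this
    exact this
  have hLn1 : dist y q.2 ≤ a (n+1) := hLq ▸ hLle (n+1)
  linarith
end

section
/- (Ekeland variational principle) Let (M,d) be a complete metric space and f : M → ℝ ∪ {+∞} proper, lower semicontinuous, and bounded below. If f(x̄) ≤ inf f + λ·ε for some x̄ ∈ M and λ, ε > 0, then there exists ȳ ∈ M such that: (i) f(ȳ) ≤ f(x̄) − λ·d(x̄,ȳ); (ii) d(x̄,ȳ) ≤ ε; (iii) f(x) + λ·d(x,ȳ) ≥ f(ȳ) for all x ∈ M. -/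
open Filter Topology

lemma ekeland_real {M : Type*} [MetricSpace M] [CompleteSpace M]
    (g : M → ℝ) (hlsc : LowerSemicontinuous g)
    (c : ℝ) (hbdd : ∀ x, c ≤ g x)
    (x0 : M) (lam : ℝ) (hlam : 0 < lam) :
    ∃ y : M, g y + lam * dist x0 y ≤ g x0 ∧
      ∀ x : M, g y ≤ g x + lam * dist x y := by
  classical
  set S : M → Set M := fun y => {x | g x + lam * dist x y ≤ g y} with hS
  have hSself : ∀ y, y ∈ S y := by intro y; simp [hS]
  have hSne : ∀ y, (g '' S y).Nonempty := fun y => ⟨g y, y, hSself y, rfl⟩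
  have hSbdd : ∀ y, BddBelow (g '' S y) := by
    intro y; exact ⟨c, by rintro t ⟨z, _, rfl⟩; exact hbdd z⟩
  have hnext : ∀ (y : M) (n : ℕ), ∃ z, z ∈ S y ∧ g z ≤ sInf (g '' S y) + (1/2)^n := by
    intro y n
    have hpos : (0:ℝ) < (1/2)^n := by positivity
    obtain ⟨t, ⟨z, hz, rfl⟩, ht⟩ := Real.lt_sInf_add_pos (hSne y) hpos
    exact ⟨z, hz, ht.le⟩
  let x : ℕ → M := fun n => Nat.rec x0 (fun n xn => (hnext xn n).choose) n
  have hx0 : x 0 = x0 := rfl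
  have hxsucc : ∀ n, x (n+1) ∈ S (x n) ∧ g (x (n+1)) ≤ sInf (g '' S (x n)) + (1/2)^n :=
    fun n => (hnext (x n) n).choose_spec
  have key : ∀ n m, n ≤ m → g (x m) + lam * dist (x m) (x n) ≤ g (x n) := by
    intro n m hnm
    induction m with
    | zero => interval_cases n; simp
    | succ m ih =>
      rcases Nat.lt_or_ge n (m+1) with h | h
      · have hnm' : n ≤ m := Nat.lt_succ_iff.mp h
        have h1 := (hxsucc m).1
        have h2 := ih hnm'
        have htri : dist (x (m+1)) (x n) ≤ dist (x (m+1)) (x m) + dist (x m) (x n) :=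
          dist_triangle _ _ _
        simp only [hS, Set.mem_setOf_eq] at h1
        nlinarith
      · have : n = m + 1 := le_antisymm hnm h
        subst this; simp
  have hanti : Antitone fun n => g (x n) := by
    apply antitone_nat_of_succ_le
    intro n
    have h1 := (hxsucc n).1
    simp only [hS, Set.mem_setOf_eq] at h1
    nlinarith [dist_nonneg (α := M) (x := x (n+1)) (y := x n)]
  have hbdd' : BddBelow (Set.range fun n => g (x n)) :=
    ⟨c, by rintro t ⟨n, rfl⟩; exact hbdd _⟩
  obtain ⟨L, hL⟩ : ∃ L, Tendsto (fun n => g (x n)) atTop (𝓝 L) :=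
    ⟨_, tendsto_atTop_ciInf hanti hbdd'⟩
  have hLle : ∀ n, L ≤ g (x n) := fun n =>
    le_of_tendsto hL (eventually_atTop.2 ⟨n, fun m hm => hanti hm⟩)
  -- Cauchy
  have hcauchy : CauchySeq x := by
    apply cauchySeq_of_le_tendsto_0 (fun N => (g (x N) - L) / lam)
    · intro n m N hn hm
      wlog hnm : n ≤ m generalizing n m
      · rw [dist_comm]; exact this m n hm hn (le_of_not_ge hnm)
      have h1 := key n m hnm
      have h2 : g (x n) ≤ g (x N) := hanti hn
      have h3 := hLle m
      rw [dist_comm, le_div_iff₀ hlam]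
      nlinarith
    · have : Tendsto (fun N => (g (x N) - L) / lam) atTop (𝓝 ((L - L)/lam)) :=
        ((hL.sub tendsto_const_nhds).div_const lam)
      simpa using this
  obtain ⟨y, hy⟩ := cauchySeq_tendsto_of_complete hcauchy
  -- y ∈ S (x n) for every n
  have hyS : ∀ n, g y + lam * dist y (x n) ≤ g (x n) := by
    intro n
    by_contra hcon
    push_neg at hcon
    set t : ℝ := (g (x n) - lam * dist y (x n) + g y) / 2 with ht
    have ht1 : t < g y := by rw [ht]; linarith
    have ht2 : g (x n) - lam * dist y (x n) < t := by rw [ht]; linarith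
    have hev1 : ∀ᶠ m in atTop, t < g (x m) :=
      hy.eventually (hlsc y t ht1)
    have hdist : Tendsto (fun m => dist (x m) (x n)) atTop (𝓝 (dist y (x n))) :=
      (Continuous.dist continuous_id continuous_const).continuousAt.tendsto.comp hy
    have hev2 : ∀ᶠ m in atTop, g (x n) - lam * dist (x m) (x n) < t := by
      have hlt : g (x n) - lam * dist y (x n) < t := ht2
      have : Tendsto (fun m => g (x n) - lam * dist (x m) (x n)) atTop
          (𝓝 (g (x n) - lam * dist y (x n))) :=
        tendsto_const_nhds.sub (hdist.const_mul lam)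
      exact this.eventually_lt_const hlt
    have hev3 : ∀ᶠ m in atTop, n ≤ m := eventually_ge_atTop n
    obtain ⟨m, h1, h2, h3⟩ := (hev1.and (hev2.and hev3)).exists
    have := key n m h3
    linarith
  refine ⟨y, ?_, ?_⟩
  · have := hyS 0; rw [hx0] at this; rw [dist_comm]; linarith [this]
  · intro z
    by_contra hcon
    push_neg at hcon
    -- z ∈ S (x n) for all n
    have hzS : ∀ n, z ∈ S (x n) := by
      intro n
      simp only [hS, Set.mem_setOf_eq]
      have htri : dist z (x n) ≤ dist z y + dist y (x n) := dist_triangle _ _ _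
      have h1 := hyS n
      have hd : dist z y = dist y z := dist_comm _ _
      nlinarith [dist_nonneg (α := M) (x := z) (y := y)]
    have hyin : ∀ n, g y ≤ g (x (n+1)) := by
      intro n
      have := hyS (n+1)
      nlinarith [dist_nonneg (α := M) (x := y) (y := x (n+1))]
    have hstep : ∀ n, g y ≤ g z + (1/2)^n := by
      intro n
      have h1 : sInf (g '' S (x n)) ≤ g z := csInf_le (hSbdd _) ⟨z, hzS n, rfl⟩
      have h2 := (hxsucc n).2
      have h3 := hyin n
      linarith
    have hfin : g y ≤ g z := by
      have : Tendsto (fun n : ℕ => g z + (1/2:ℝ)^n) atTop (𝓝 (g z + 0)) :=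
        tendsto_const_nhds.add (tendsto_pow_atTop_nhds_zero_of_lt_one (by norm_num) (by norm_num))
      rw [add_zero] at this
      exact ge_of_tendsto this (Eventually.of_forall hstep)
    nlinarith [dist_nonneg (α := M) (x := z) (y := y)]

/-- Ekeland variational principle: if `(M,d)` is a complete metric space and
`f : M → ℝ ∪ {+∞}` is proper, lower semicontinuous and bounded below, and
`f(x̄) ≤ inf f + λ·ε`, then there is `ȳ` with (i) `f(ȳ) + λ·d(x̄,ȳ) ≤ f(x̄)`,
(ii) `d(x̄,ȳ) ≤ ε`, and (iii) `f(x) + λ·d(x,ȳ) ≥ f(ȳ)` for all `x`. -/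
theorem ekeland_variational_principle
    {M : Type*} [MetricSpace M] [CompleteSpace M]
    (f : M → EReal) (hbot : ∀ x, f x ≠ ⊥)
    (hproper : ∃ x, f x ≠ ⊤)
    (hlsc : LowerSemicontinuous f)
    (hbdd : ∃ c : ℝ, ∀ x, (c : EReal) ≤ f x)
    (xbar : M) (lam ε : ℝ) (hlam : 0 < lam) (hε : 0 < ε)
    (hx : f xbar ≤ (⨅ x, f x) + ((lam * ε : ℝ) : EReal)) :
    ∃ ybar : M,
      f ybar + ((lam * dist xbar ybar : ℝ) : EReal) ≤ f xbar ∧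
      dist xbar ybar ≤ ε ∧
      ∀ x : M, f ybar ≤ f x + ((lam * dist x ybar : ℝ) : EReal) := by
  obtain ⟨c, hc⟩ := hbdd
  obtain ⟨x1, hx1⟩ := hproper
  have hinf_le : ∀ x, (⨅ x, f x) ≤ f x := fun x => iInf_le _ x
  have hinf_ne_top : (⨅ x, f x) ≠ ⊤ :=
    fun h => hx1 (top_le_iff.mp (h ▸ hinf_le x1))
  have hinf_ne_bot : (⨅ x, f x) ≠ ⊥ := by
    intro h
    have : (c : EReal) ≤ ⨅ x, f x := le_iInf hc
    rw [h] at this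
    exact (EReal.coe_ne_bot c) (le_bot_iff.mp this)
  have hfxbar_ne_top : f xbar ≠ ⊤ := by
    intro h
    rw [h] at hx
    have := hx.trans_lt (EReal.add_lt_top hinf_ne_top (EReal.coe_ne_top _))
    exact lt_irrefl _ this

  -- truncated function
  set e : M → EReal := fun x => min (f x) (f xbar) with he
  have he_ne_top : ∀ x, e x ≠ ⊤ := fun x =>
    fun h => hfxbar_ne_top (top_le_iff.mp (h ▸ min_le_right (f x) (f xbar)))
  have he_ne_bot : ∀ x, e x ≠ ⊥ := by
    intro x h
    rcases min_cases (f x) (f xbar) with ⟨h1, _⟩ | ⟨h1, _⟩ <;>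
      simp only [he] at h <;> rw [h1] at h
    · exact hbot x h
    · exact hbot xbar h
  set g : M → ℝ := fun x => (e x).toReal with hg
  have hge : ∀ x, (g x : EReal) = e x := fun x =>
    EReal.coe_toReal (he_ne_top x) (he_ne_bot x)
  have hgexbar : (g xbar : EReal) = f xbar := by
    rw [hge xbar]; simp [he]
  have hglsc : LowerSemicontinuous g := by
    intro y t ht
    have ht' : (t : EReal) < e y := by
      rw [← hge y]; exact_mod_cast ht
    have h1 : (t : EReal) < f y := ht'.trans_le (min_le_left _ _)
    have h2 : (t : EReal) < f xbar := ht'.trans_le (min_le_right _ _)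
    filter_upwards [hlsc y t h1] with z hz
    have : (t : EReal) < e z := lt_min hz h2
    rw [← hge z] at this
    exact_mod_cast this
  have hgbdd : ∀ x, min c (f xbar).toReal ≤ g x := by
    intro x
    rcases min_cases (f x) (f xbar) with ⟨h1, _⟩ | ⟨h1, _⟩ <;>
      simp only [hg, he, h1]
    · refine le_trans (min_le_left _ _) ?_
      rw [← EReal.toReal_coe c]
      exact EReal.toReal_le_toReal (hc x) (EReal.coe_ne_bot c) (he_ne_top x |>.imp (by simp [he, h1]) |>.elim)
    · exact min_le_right _ _
  obtain ⟨y, hi, hiii⟩ := ekeland_real g hglsc _ hgbdd xbar lam hlam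
  -- f y = g y
  have hfy : (g y : EReal) = f y := by
    rcases le_or_gt (f y) (f xbar) with h | h
    · rw [hge y]; simp only [he]; exact min_eq_left h
    · -- then e y = f xbar, so g y = g xbar, forcing y = xbar
      have hey : e y = f xbar := min_eq_right h.le
      have hgy : g y = g xbar := by
        have : e xbar = f xbar := by simp [he]
        simp only [hg, hey, this]
      have hd : dist xbar y = 0 := by nlinarith [dist_nonneg (α := M) (x := xbar) (y := y)]
      have : y = xbar := (dist_eq_zero.mp hd).symm
      rw [this] at h
      exact absurd h (lt_irrefl _)
  refine ⟨y, ?_, ?_, ?_⟩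
  · calc f y + ((lam * dist xbar y : ℝ) : EReal)
        = ((g y + lam * dist xbar y : ℝ) : EReal) := by
          rw [← hfy]; exact_mod_cast rfl
      _ ≤ ((g xbar : ℝ) : EReal) := by exact_mod_cast hi
      _ = f xbar := hgexbar
  · -- distance bound
    have hinf_fin : ((⨅ x, f x).toReal : EReal) = ⨅ x, f x :=
      EReal.coe_toReal hinf_ne_top hinf_ne_bot
    have h1 : (⨅ x, f x).toReal ≤ g y := by
      have : (⨅ x, f x) ≤ (g y : EReal) := hfy ▸ hinf_le y
      rw [← hinf_fin] at this
      exact_mod_cast this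
    have h2 : g xbar ≤ (⨅ x, f x).toReal + lam * ε := by
      have : (g xbar : EReal) ≤ (((⨅ x, f x).toReal + lam * ε : ℝ) : EReal) := by
        rw [hgexbar]
        push_cast
        rw [hinf_fin]
        exact hx
      exact_mod_cast this
    nlinarith
  · intro z
    have hgz : (g z : EReal) ≤ f z := by
      rw [hge z]; exact min_le_left _ _
    calc f y = (g y : EReal) := hfy.symm
      _ ≤ ((g z + lam * dist z y : ℝ) : EReal) := by exact_mod_cast hiii z
      _ = (g z : EReal) + ((lam * dist z y : ℝ) : EReal) := by push_cast; rfl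
      _ ≤ f z + ((lam * dist z y : ℝ) : EReal) := add_le_add_left hgz _
end

section
/- Assume F⁽¹⁾(x,v) ⊃ r·B_Y for all (x,v) ∈ graph F with x ∈ U, v ∈ V, where r > 0. Then for any 0 < r' < r and any ξ ∈ (1/r, 1/r'), the following holds: for any x ∈ U, any v ∈ F(x) ∩ V, and any y ∈ V with y ≠ v, there exists (u,w) ∈ graph F such that ‖y − w‖ < ‖y − v‖ − r'·d_ξ((x,v),(u,w)). -/
open Metric Set Filter

/-- Contingent variation of `F` at `(x,y)` (sequential form). -/
def contVar {X Y : Type*} [MetricSpace X]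
    [NormedAddCommGroup Y] [NormedSpace ℝ Y]
    (F : X → Set Y) (x : X) (y : Y) : Set Y :=
  {v : Y | ∃ (t : ℕ → ℝ) (u : ℕ → X) (w : ℕ → Y),
    (∀ n, 0 < t n) ∧ Tendsto t atTop (nhds 0) ∧
    (∀ n, dist x (u n) ≤ t n) ∧ (∀ n, w n ∈ F (u n)) ∧
    Tendsto (fun n => (t n)⁻¹ • (w n - y)) atTop (nhds v)}

/-- If `F⁽¹⁾(x,v) ⊇ r·B_Y` on `graph F ∩ (U × V)`, then for any `0 < r' < r` and any
`ξ ∈ (1/r, 1/r')`, for all `x ∈ U`, `v ∈ F(x) ∩ V`, `y ∈ V` with `y ≠ v`, there is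
`(u,w) ∈ graph F` with `‖y − w‖ < ‖y − v‖ − r'·d_ξ((x,v),(u,w))`. -/
theorem contVar_ball_implies_decrease
    {X Y : Type*} [MetricSpace X]
    [NormedAddCommGroup Y] [NormedSpace ℝ Y] [CompleteSpace Y]
    (F : X → Set Y) (U : Set X) (V : Set Y)
    (hU : U.Nonempty) (hV : V.Nonempty)
    (r : ℝ) (hr : 0 < r)
    (hvar : ∀ x ∈ U, ∀ v ∈ F x, v ∈ V →
      closedBall (0 : Y) r ⊆ contVar F x v) :
    ∀ r' : ℝ, 0 < r' → r' < r → ∀ ξ : ℝ, 1 / r < ξ → ξ < 1 / r' →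
      ∀ x ∈ U, ∀ v ∈ F x ∩ V, ∀ y ∈ V, y ≠ v →
        ∃ u : X, ∃ w ∈ F u,
          ‖y - w‖ < ‖y - v‖ - r' * max (dist x u) (ξ * ‖v - w‖) := by
  intro r' hr' hr'r ξ hξ1 hξ2 x hx v hv y hy hyv
  obtain ⟨hvF, hvV⟩ := hv
  have hξ0 : 0 < ξ := lt_trans (by positivity) hξ1
  have hrξ : 1 < r * ξ := by
    rw [div_lt_iff₀ hr] at hξ1; linarith
  have hr'ξ : r' * ξ < 1 := by
    rw [lt_div_iff₀ hr'] at hξ2; linarith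
  set c := ‖y - v‖ with hc
  have hc0 : 0 < c := norm_pos_iff.mpr (sub_ne_zero.mpr hyv)
  set h : Y := (r / c) • (y - v) with hh
  have hhnorm : ‖h‖ = r := by
    rw [hh, norm_smul, Real.norm_eq_abs, abs_of_pos (div_pos hr hc0), ← hc]
    field_simp
  have hmem : h ∈ contVar F x v := by
    apply hvar x hx v hvF hvV
    simp [mem_closedBall, dist_eq_norm, hhnorm]
  obtain ⟨t, u, w, ht, htt, hdu, hwF, hconv⟩ := hmem
  set ε : ℝ := (r - r' * ξ * r) / 3 with hε
  have hε0 : 0 < ε := by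
    have : r' * ξ * r < r := by nlinarith
    simp only [hε]; linarith
  have h1 : ∀ᶠ n in atTop, ‖(t n)⁻¹ • (w n - v) - h‖ < ε := by
    have := hconv
    rw [Metric.tendsto_atTop] at this
    obtain ⟨N, hN⟩ := this ε hε0
    exact eventually_atTop.mpr ⟨N, fun n hn => by
      simpa [dist_eq_norm] using hN n hn⟩
  have h2 : ∀ᶠ n in atTop, t n < c / r := by
    exact htt.eventually (eventually_lt_nhds (by positivity))
  obtain ⟨n, hn1, hn2⟩ := (h1.and h2).exists
  refine ⟨u n, w n, hwF n, ?_⟩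
  set T := t n with hT
  have hT0 : 0 < T := ht n
  have key : ‖w n - v - T • h‖ < ε * T := by
    have : ‖T • ((T⁻¹) • (w n - v) - h)‖ < T * ε := by
      rw [norm_smul, Real.norm_eq_abs, abs_of_pos hT0]
      exact (mul_lt_mul_iff_right₀ hT0).mpr hn1
    rw [smul_sub, smul_inv_smul₀ (ne_of_gt hT0)] at this
    linarith [this]
  have hTr : T * r ≤ c := by
    have := hn2
    rw [lt_div_iff₀ hr] at this
    linarith
  have hyvTh : ‖y - v - T • h‖ = c - T * r := by
    have : y - v - T • h = (1 - T * r / c) • (y - v) := by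
      rw [hh, smul_smul, sub_smul, one_smul]
      ring_nf
    rw [this, norm_smul, Real.norm_eq_abs, ← hc,
      abs_of_nonneg (by rw [sub_nonneg, div_le_one hc0]; linarith)]
    field_simp
  have hyw : ‖y - w n‖ ≤ c - T * r + ε * T := by
    have : y - w n = (y - v - T • h) - (w n - v - T • h) := by abel
    rw [this]
    calc ‖(y - v - T • h) - (w n - v - T • h)‖
        ≤ ‖y - v - T • h‖ + ‖w n - v - T • h‖ := norm_sub_le _ _
      _ ≤ c - T * r + ε * T := by rw [hyvTh]; linarith [key.le]
  have hvw : ‖v - w n‖ ≤ (r + ε) * T := by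
    have : v - w n = -(w n - v - T • h) - T • h := by abel
    rw [this]
    calc ‖-(w n - v - T • h) - T • h‖
        ≤ ‖-(w n - v - T • h)‖ + ‖T • h‖ := norm_sub_le _ _
      _ = ‖w n - v - T • h‖ + T * r := by
          rw [norm_neg, norm_smul, Real.norm_eq_abs, abs_of_pos hT0, hhnorm]
      _ ≤ (r + ε) * T := by nlinarith [key.le]
  have hmax : max (dist x (u n)) (ξ * ‖v - w n‖) ≤ ξ * (r + ε) * T := by
    apply max_le
    · calc dist x (u n) ≤ T := hdu n
        _ ≤ ξ * (r + ε) * T := by nlinarith [mul_nonneg (mul_nonneg hξ0.le hε0.le) hT0.le, mul_nonneg (sub_nonneg.mpr hrξ.le) hT0.le]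
    · calc ξ * ‖v - w n‖ ≤ ξ * ((r + ε) * T) :=
          (mul_le_mul_iff_right₀ hξ0).mpr hvw
        _ = ξ * (r + ε) * T := by ring
  have final : c - T * r + ε * T < c - r' * (ξ * (r + ε) * T) := by
    have : r' * ξ * (r + ε) + ε < r := by nlinarith
    nlinarith
  calc ‖y - w n‖ ≤ c - T * r + ε * T := hyw
    _ < c - r' * (ξ * (r + ε) * T) := final
    _ ≤ c - r' * max (dist x (u n)) (ξ * ‖v - w n‖) := by
        have := (mul_le_mul_iff_right₀ hr').mpr hmax
        linarith
end

section
/- sur_m F(U|V) = sup{ r ≥ 0 : ∃ ξ > 0 such that for all (x,v) ∈ graph F with x ∈ U, and all y ∈ V satisfying 0 < d(y,v) < r·m_U(x), there exists (u,w) ∈ graph F with d(y,w) < d(y,v) − r·d_ξ((x,v),(u,w)) }. -/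
open Metric Set EMetric

open Filter Topology in
private lemma ekeland_graph {X Y : Type*} [MetricSpace X] [MetricSpace Y]
    {s : Set (X × Y)} (hs : IsComplete s) (y : Y) {ξ κ : ℝ} (hξ : 0 < ξ) (hκ : 0 < κ)
    {p₀ : X × Y} (hp₀ : p₀ ∈ s) :
    ∃ p ∈ s,
      dist y p.2 + κ * max (dist p.1 p₀.1) (ξ * dist p.2 p₀.2) ≤ dist y p₀.2 ∧
      ∀ q ∈ s, dist y p.2 ≤ dist y q.2 + κ * max (dist p.1 q.1) (ξ * dist p.2 q.2) := by
  set f : X × Y → ℝ := fun p => dist y p.2 with hf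
  set D : X × Y → X × Y → ℝ := fun p q => max (dist p.1 q.1) (ξ * dist p.2 q.2) with hD
  have hDnn : ∀ p q, 0 ≤ D p q := fun p q => le_trans dist_nonneg (le_max_left _ _)
  have hDself : ∀ p, D p p = 0 := by
    intro p; simp [hD, dist_self]
  have hDsymm : ∀ p q, D p q = D q p := by
    intro p q; simp [hD, dist_comm]
  have hDtri : ∀ p q o, D p o ≤ D p q + D q o := by
    intro p q o
    apply max_le
    · exact (dist_triangle _ _ _).trans
        (add_le_add (le_max_left _ _) (le_max_left _ _))
    · calc ξ * dist p.2 o.2 ≤ ξ * (dist p.2 q.2 + dist q.2 o.2) := by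
            exact mul_le_mul_of_nonneg_left (dist_triangle _ _ _) hξ.le
        _ = ξ * dist p.2 q.2 + ξ * dist q.2 o.2 := by ring
        _ ≤ D p q + D q o := add_le_add (le_max_right _ _) (le_max_right _ _)
  have hfnn : ∀ p, 0 ≤ f p := fun p => dist_nonneg
  -- order relation
  set Le : X × Y → X × Y → Prop := fun q p => f q + κ * D q p ≤ f p with hLe
  have hLerefl : ∀ p, Le p p := by intro p; simp [hLe, hDself]
  have hLetrans : ∀ o q p, Le o q → Le q p → Le o p := by
    intro o q p h1 h2
    have := hDtri o q p
    simp only [hLe] at *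
    nlinarith [hDnn o q, hDnn q p]
  have hLef : ∀ q p, Le q p → f q ≤ f p := by
    intro q p h
    have := hDnn q p
    simp only [hLe] at h
    nlinarith
  -- the iterative step
  have exists_next : ∀ (n : ℕ) (p : X × Y), p ∈ s →
      ∃ q, q ∈ s ∧ Le q p ∧ ∀ z ∈ s, Le z p → f q ≤ f z + (1/2 : ℝ)^n := by
    intro n p hp
    set S : Set ℝ := f '' {z ∈ s | Le z p} with hS
    have hSne : S.Nonempty := ⟨f p, ⟨p, ⟨hp, hLerefl p⟩, rfl⟩⟩
    have hSbdd : BddBelow S := ⟨0, by rintro a ⟨z, hz, rfl⟩; exact hfnn z⟩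
    obtain ⟨a, ⟨z, ⟨hzs, hzle⟩, rfl⟩, hlt⟩ :=
      exists_lt_of_csInf_lt hSne (lt_add_of_pos_right (sInf S) (by positivity : (0:ℝ) < (1/2:ℝ)^n))
    refine ⟨z, hzs, hzle, fun w hws hwle => ?_⟩
    have : sInf S ≤ f w := csInf_le hSbdd ⟨w, ⟨hws, hwle⟩, rfl⟩
    linarith
  choose next h1 h2 h3 using exists_next
  -- the sequence
  let seqP : ℕ → {p : X × Y // p ∈ s} := fun n =>
    Nat.rec ⟨p₀, hp₀⟩ (fun n ih => ⟨next n ih.1 ih.2, h1 n ih.1 ih.2⟩) n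
  set u : ℕ → X × Y := fun n => (seqP n).1 with hu
  have hus : ∀ n, u n ∈ s := fun n => (seqP n).2
  have hu0 : u 0 = p₀ := rfl
  have hstep : ∀ n, Le (u (n+1)) (u n) := fun n => h2 n _ _
  have hmin : ∀ n, ∀ z ∈ s, Le z (u n) → f (u (n+1)) ≤ f z + (1/2:ℝ)^n := fun n => h3 n _ _
  have hchain : ∀ n m, n ≤ m → Le (u m) (u n) := by
    intro n m hnm
    induction m, hnm using Nat.le_induction with
    | base => exact hLerefl _
    | succ m hnm ih => exact hLetrans _ _ _ (hstep m) ih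
  have hanti : ∀ n m, n ≤ m → f (u m) ≤ f (u n) := fun n m h => hLef _ _ (hchain n m h)
  -- Cauchy
  set C : ℝ := max 1 ξ⁻¹ with hC
  have hC1 : (1:ℝ) ≤ C := le_max_left _ _
  have hC0 : 0 < C := lt_of_lt_of_le one_pos hC1
  have hdD : ∀ p q, dist p q ≤ C * D p q := by
    intro p q
    rw [Prod.dist_eq]
    apply max_le
    · calc dist p.1 q.1 ≤ D p q := le_max_left _ _
        _ ≤ C * D p q := le_mul_of_one_le_left (hDnn p q) hC1
    · have h2' : ξ * dist p.2 q.2 ≤ D p q := le_max_right _ _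
      have : dist p.2 q.2 ≤ ξ⁻¹ * D p q := by
        rw [le_inv_mul_iff₀ hξ]; exact h2'
      exact this.trans (mul_le_mul_of_nonneg_right (le_max_right _ _) (hDnn p q))
  set d : ℕ → ℝ := fun n => (C / κ) * (f (u n) - f (u (n+1))) with hd
  have hdnn : ∀ n, 0 ≤ d n := by
    intro n
    have := hanti n (n+1) (Nat.le_succ n)
    have := hC0
    have := hκ
    apply mul_nonneg (by positivity) (by linarith)
  have hdist : ∀ n, dist (u n) (u (n+1)) ≤ d n := by
    intro n
    have h := hstep n
    simp only [hLe] at h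
    have hDb : D (u (n+1)) (u n) ≤ (f (u n) - f (u (n+1))) / κ := by
      rw [le_div_iff₀ hκ]; nlinarith
    calc dist (u n) (u (n+1)) = dist (u (n+1)) (u n) := dist_comm _ _
      _ ≤ C * D (u (n+1)) (u n) := hdD _ _
      _ ≤ C * ((f (u n) - f (u (n+1))) / κ) := mul_le_mul_of_nonneg_left hDb hC0.le
      _ = d n := by rw [hd]; ring
  have hsum : Summable d := by
    apply summable_of_sum_range_le hdnn (c := (C / κ) * f (u 0))
    intro n
    have : ∑ i ∈ Finset.range n, d i = (C / κ) * (f (u 0) - f (u n)) := by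
      rw [← Finset.mul_sum, Finset.sum_range_sub' (fun i => f (u i))]
    rw [this]
    have := hfnn (u n)
    have : f (u 0) - f (u n) ≤ f (u 0) := by linarith
    apply mul_le_mul_of_nonneg_left this (by positivity)
  have hcauchy : CauchySeq u := cauchySeq_of_dist_le_of_summable d hdist hsum
  obtain ⟨p, hps, hlim⟩ := cauchySeq_tendsto_of_isComplete hs hus hcauchy
  have hlim1 : Tendsto (fun m => (u m).1) atTop (𝓝 p.1) := (continuous_fst.tendsto p).comp hlim
  have hlim2 : Tendsto (fun m => (u m).2) atTop (𝓝 p.2) := (continuous_snd.tendsto p).comp hlim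
  have hflim : Tendsto (fun m => f (u m)) atTop (𝓝 (f p)) :=
    tendsto_const_nhds.dist hlim2
  have hplen : ∀ n, Le p (u n) := by
    intro n
    have hDlim : Tendsto (fun m => D (u m) (u n)) atTop (𝓝 (D p (u n))) :=
      (hlim1.dist tendsto_const_nhds).max ((hlim2.dist tendsto_const_nhds).const_mul ξ)
    have : Tendsto (fun m => f (u m) + κ * D (u m) (u n)) atTop
        (𝓝 (f p + κ * D p (u n))) := hflim.add (hDlim.const_mul κ)
    refine le_of_tendsto this ?_
    filter_upwards [eventually_ge_atTop n] with m hm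
    exact hchain n m hm
  have hmin' : ∀ q ∈ s, f p ≤ f q + κ * D p q := by
    intro q hq
    by_contra h
    push_neg at h
    have hqLep : Le q p := by
      simp only [hLe]; rw [hDsymm q p]; linarith
    have hqn : ∀ n, Le q (u n) := fun n => hLetrans _ _ _ hqLep (hplen n)
    have hfpq : ∀ n : ℕ, f p ≤ f q + (1/2:ℝ)^n := by
      intro n
      have h1' := hmin n q hq (hqn n)
      have h2' := hLef _ _ (hplen (n+1))
      linarith
    have : f p ≤ f q := by
      have htend : Tendsto (fun n : ℕ => f q + (1/2:ℝ)^n) atTop (𝓝 (f q + 0)) :=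
        tendsto_const_nhds.add
          (tendsto_pow_atTop_nhds_zero_of_lt_one (by norm_num) (by norm_num))
      rw [add_zero] at htend
      exact ge_of_tendsto htend (Eventually.of_forall hfpq)
    nlinarith [hDnn p q]
  exact ⟨p, hps, by exact hplen 0, hmin'⟩

/-- The modulus of surjection `sur_m F(U|V)` equals the supremum of all `r ≥ 0`
for which there is `ξ > 0` such that the Ekeland-type decrease condition holds. -/
theorem surjection_modulus_eq
    {X Y : Type*} [MetricSpace X] [MetricSpace Y]
    (F : X → Set Y) (U : Set X) (V : Set Y)
    (hcomp : IsComplete {p : X × Y | p.2 ∈ F p.1}) :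
    sSup {r : ℝ | 0 ≤ r ∧ ∀ x ∈ U, ∀ v ∈ F x, ∀ t : ℝ, 0 < t →
        ENNReal.ofReal t < infEdist x Uᶜ →
        closedBall v (r * t) ∩ V ⊆ ⋃ u ∈ closedBall x t, F u} =
    sSup {r : ℝ | 0 ≤ r ∧ ∃ ξ : ℝ, 0 < ξ ∧
        ∀ x ∈ U, ∀ v ∈ F x, ∀ y ∈ V,
          0 < dist y v →
          ENNReal.ofReal (dist y v) < ENNReal.ofReal r * infEdist x Uᶜ →
          ∃ u : X, ∃ w ∈ F u,
            dist y w < dist y v - r * max (dist x u) (ξ * dist v w)} := by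
  set A := {r : ℝ | 0 ≤ r ∧ ∀ x ∈ U, ∀ v ∈ F x, ∀ t : ℝ, 0 < t →
        ENNReal.ofReal t < infEdist x Uᶜ →
        closedBall v (r * t) ∩ V ⊆ ⋃ u ∈ closedBall x t, F u} with hA
  set B := {r : ℝ | 0 ≤ r ∧ ∃ ξ : ℝ, 0 < ξ ∧
        ∀ x ∈ U, ∀ v ∈ F x, ∀ y ∈ V,
          0 < dist y v →
          ENNReal.ofReal (dist y v) < ENNReal.ofReal r * infEdist x Uᶜ →
          ∃ u : X, ∃ w ∈ F u,
            dist y w < dist y v - r * max (dist x u) (ξ * dist v w)} with hB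
  have h0A : (0:ℝ) ∈ A := by
    refine ⟨le_refl 0, fun x hx v hv t ht htU z hz => ?_⟩
    obtain ⟨hz1, hz2⟩ := hz
    rw [zero_mul, Metric.mem_closedBall, dist_le_zero] at hz1
    subst hz1
    exact mem_biUnion (Metric.mem_closedBall_self ht.le) hv
  have h0B : (0:ℝ) ∈ B := by
    refine ⟨le_refl 0, 1, one_pos, fun x hx v hv z hz hd hlt => ?_⟩
    rw [ENNReal.ofReal_zero, zero_mul] at hlt
    exact absurd hlt (by simp)
  have hBA : B ⊆ A := by
    rintro r ⟨hr0, ξ, hξ, H⟩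
    refine ⟨hr0, fun x hx v hv t ht htU z hz => ?_⟩
    obtain ⟨hz1, hzV⟩ := hz
    rw [Metric.mem_closedBall] at hz1
    rcases eq_or_lt_of_le (dist_nonneg : (0:ℝ) ≤ dist z v) with hzv | hzv
    · -- z = v
      have : z = v := by rw [← dist_le_zero, ← hzv]
      subst this
      exact mem_biUnion (Metric.mem_closedBall_self ht.le) hv
    · have hrpos : 0 < r := by
        rcases hr0.lt_or_eq with h | h
        · exact h
        · exfalso; rw [← h, zero_mul] at hz1; linarith
      set κ := dist z v / t with hκdef
      have hκ : 0 < κ := div_pos hzv ht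
      have hκr : κ ≤ r := by
        rw [hκdef, div_le_iff₀ ht]; linarith [hz1]
      obtain ⟨p, hps, hE1, hE2⟩ := ekeland_graph hcomp z hξ hκ
        (p₀ := (x, v)) (by exact hv)
      simp only at hE1
      -- show dist z p.2 = 0
      have hw0 : dist z p.2 = 0 := by
        by_contra hne
        have hw : 0 < dist z p.2 := lt_of_le_of_ne dist_nonneg (Ne.symm hne)
        set a := dist z p.2 with ha
        have hDnn : (0:ℝ) ≤ max (dist p.1 x) (ξ * dist p.2 v) :=
          le_trans dist_nonneg (le_max_left _ _)
        have hax : dist p.1 x ≤ (dist z v - a) / κ := by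
          rw [le_div_iff₀ hκ]
          nlinarith [le_max_left (dist p.1 x) (ξ * dist p.2 v)]
        have hkey : dist x p.1 + t * a / dist z v ≤ t := by
          have h1 : (dist z v - a) / κ = t - t * a / dist z v := by
            rw [hκdef]; field_simp
          rw [dist_comm x p.1]
          rw [h1] at hax
          linarith
        -- infEdist bound at p.1
        have hta : 0 < t * a / dist z v := by positivity
        have hinf : ENNReal.ofReal (t * a / dist z v) < infEdist p.1 Uᶜ := by
          have k1 : infEdist x Uᶜ ≤ infEdist p.1 Uᶜ + edist x p.1 :=
            infEdist_le_infEdist_add_edist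
          rw [edist_dist] at k1
          have k2 : ENNReal.ofReal t < infEdist p.1 Uᶜ + ENNReal.ofReal (dist x p.1) :=
            lt_of_lt_of_le htU k1
          have k3 : ENNReal.ofReal (t * a / dist z v) + ENNReal.ofReal (dist x p.1)
              ≤ ENNReal.ofReal t := by
            rw [← ENNReal.ofReal_add (by positivity) dist_nonneg]
            exact ENNReal.ofReal_le_ofReal (by linarith)
          have k4 : ENNReal.ofReal (t * a / dist z v) + ENNReal.ofReal (dist x p.1)
              < infEdist p.1 Uᶜ + ENNReal.ofReal (dist x p.1) := lt_of_le_of_lt k3 k2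
          exact (ENNReal.add_lt_add_iff_right ENNReal.ofReal_ne_top).mp k4
        have hpU : p.1 ∈ U := by
          by_contra hpu
          have hz0 : infEdist p.1 Uᶜ = 0 := infEdist_zero_of_mem hpu
          rw [hz0] at hinf
          exact absurd hinf (by simp [ENNReal.ofReal_pos.mpr hta])
        have hbound : ENNReal.ofReal a < ENNReal.ofReal r * infEdist p.1 Uᶜ := by
          have m1 : ENNReal.ofReal r * ENNReal.ofReal (t * a / dist z v)
              < ENNReal.ofReal r * infEdist p.1 Uᶜ := by
            rw [ENNReal.mul_lt_mul_iff_right (by simp [hrpos]) ENNReal.ofReal_ne_top]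
            exact hinf
          have m2 : ENNReal.ofReal a ≤ ENNReal.ofReal r * ENNReal.ofReal (t * a / dist z v) := by
            rw [← ENNReal.ofReal_mul hr0]
            apply ENNReal.ofReal_le_ofReal
            have : r * (t * a / dist z v) = (r * t) * (a / dist z v) := by ring
            rw [this]
            have h2 : dist z v * (a / dist z v) = a := by field_simp
            calc a = dist z v * (a / dist z v) := h2.symm
              _ ≤ (r * t) * (a / dist z v) := by
                  apply mul_le_mul_of_nonneg_right (by linarith) (by positivity)
          exact lt_of_le_of_lt m2 m1
        obtain ⟨u', w', hw'F, hlt'⟩ := H p.1 hpU p.2 hps z hzV hw hbound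
        have hE2' := hE2 (u', w') hw'F
        simp only at hE2'
        have hmax_nn : (0:ℝ) ≤ max (dist p.1 u') (ξ * dist p.2 w') :=
          le_trans dist_nonneg (le_max_left _ _)
        nlinarith
      -- conclude
      have hzp : z = p.2 := by rw [← dist_le_zero, hw0]
      have hDle : dist p.1 x ≤ t := by
        have h1 : κ * max (dist p.1 x) (ξ * dist p.2 v) ≤ dist z v := by
          nlinarith [hE1, dist_nonneg (x := z) (y := p.2)]
        have h2 : max (dist p.1 x) (ξ * dist p.2 v) ≤ dist z v / κ := by
          rw [le_div_iff₀ hκ]; linarith [mul_comm κ (max (dist p.1 x) (ξ * dist p.2 v))]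
        have h3 : dist z v / κ = t := by
          rw [hκdef]; field_simp
        exact le_trans (le_trans (le_max_left _ _) h2) (le_of_eq h3)
      have hp1ball : p.1 ∈ Metric.closedBall x t := by
        rw [Metric.mem_closedBall]; exact hDle
      have hzF : z ∈ F p.1 := by rw [hzp]; exact hps
      exact mem_biUnion hp1ball hzF
  have hAB : ∀ r ∈ A, ∀ r', 0 ≤ r' → r' < r → r' ∈ B := by
    rintro r ⟨hr0, H⟩ r' hr'0 hr'r
    have hrpos : 0 < r := lt_of_le_of_lt hr'0 hr'r
    refine ⟨hr'0, 1/(r'+1), by positivity, fun x hx v hv z hzV hd hlt => ?_⟩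
    set t := dist z v / r with htdef
    have ht : 0 < t := div_pos hd hrpos
    have htU : ENNReal.ofReal t < infEdist x Uᶜ := by
      have k1 : ENNReal.ofReal (dist z v) < ENNReal.ofReal r * infEdist x Uᶜ := by
        refine lt_of_lt_of_le hlt ?_
        exact mul_le_mul_left (ENNReal.ofReal_le_ofReal hr'r.le) _
      rw [htdef, ENNReal.ofReal_div_of_pos hrpos]
      rw [ENNReal.div_lt_iff (Or.inl (by simp [hrpos])) (Or.inl ENNReal.ofReal_ne_top)]
      rw [mul_comm] at k1
      exact k1
    have hzball : z ∈ closedBall v (r * t) ∩ V := by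
      refine ⟨?_, hzV⟩
      rw [Metric.mem_closedBall, htdef, mul_div_cancel₀ _ (ne_of_gt hrpos)]
    obtain ⟨u, hu⟩ := mem_iUnion.mp (H x hx v hv t ht htU hzball)
    obtain ⟨huball, huF⟩ := mem_iUnion.mp hu
    refine ⟨u, z, huF, ?_⟩
    rw [dist_self]
    have hxu : dist x u ≤ t := Metric.mem_closedBall'.mp huball
    have hmax : r' * max (dist x u) ((1/(r'+1)) * dist v z) < dist z v := by
      rw [mul_max_of_nonneg _ _ hr'0]
      apply max_lt
      · calc r' * dist x u ≤ r' * t := mul_le_mul_of_nonneg_left hxu hr'0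
          _ < r * t := by apply mul_lt_mul_of_pos_right hr'r ht
          _ = dist z v := by rw [htdef, mul_div_cancel₀ _ (ne_of_gt hrpos)]
      · rw [dist_comm v z]
        have : r' * (1/(r'+1) * dist z v) = (r'/(r'+1)) * dist z v := by ring
        rw [this]
        have h1 : r'/(r'+1) < 1 := by
          rw [div_lt_one (by linarith)]; linarith
        nlinarith
    linarith
  by_cases hbdd : BddAbove A
  · have hBbdd : BddAbove B := hbdd.mono hBA
    apply le_antisymm
    · apply csSup_le ⟨0, h0A⟩
      intro r hr
      by_contra h
      push_neg at h
      have hB0 : 0 ≤ sSup B := le_csSup hBbdd h0B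
      have h1 : sSup B < (sSup B + r)/2 := by linarith
      have h2 : (sSup B + r)/2 < r := by linarith
      have hmem : (sSup B + r)/2 ∈ B := hAB r hr _ (by linarith) h2
      have := le_csSup hBbdd hmem
      linarith
    · exact csSup_le_csSup hbdd ⟨0, h0B⟩ hBA
  · have hBbdd : ¬ BddAbove B := by
      rintro ⟨M, hM⟩
      have hM0 : 0 ≤ M := hM h0B
      apply hbdd
      refine ⟨M + 1, fun r hr => ?_⟩
      by_contra hcon
      push_neg at hcon
      have hmem : M + 1 ∈ B := hAB r hr (M+1) (by linarith) hcon
      have := hM hmem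
      linarith
    rw [Real.sSup_of_not_bddAbove hbdd, Real.sSup_of_not_bddAbove hBbdd]
end
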